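/- The bivariate logistic extreme value distribution is 2-increasing (assigns nonnegative mass to rectangles): for every 0 < α ≤ 1 and all 0 < a₁ ≤ b₁ and 0 < a₂ ≤ b₂, G_α(b₁, b₂) − G_α(a₁, b₂) − G_α(b₁, a₂) + G_α(a₁, a₂) ≥ 0, where G_α(x, y) = exp(−((1/x)^{1/α} + (1/y)^{1/α})^{α}). -/

import Mathlib

/-!
Under the order-reversing substitution `u = (1/x)^(1/α)`, `G_α(x, y) = φ(u + v)` with
`φ(z) = exp (-z^α)`. As `z ↦ z^α` is concave on `[0, ∞)` and `exp ∘ neg` is convex and antitone,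
`φ` is convex there, and the increments `φ(z + d) - φ(z)` of a convex function grow with `z`;
this is exactly the rectangle inequality.
-/

open Real Set

variable {𝕜 β : Type*} [Field 𝕜] [LinearOrder 𝕜] [IsStrictOrderedRing 𝕜]
  [AddCommGroup β] [PartialOrder β] [IsOrderedAddMonoid β] [Module 𝕜 β]

theorem ConvexOn.map_add_sub_map_le {s : Set 𝕜} {f : 𝕜 → β} (hf : ConvexOn 𝕜 s f)
    {x y d : 𝕜} (hx : x ∈ s) (hyd : y + d ∈ s) (hxy : x ≤ y) (hd : 0 ≤ d) :
    f (x + d) - f x ≤ f (y + d) - f y := by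
  rcases (add_nonneg (sub_nonneg.2 hxy) hd).eq_or_lt with hL | hL
  · obtain ⟨rfl, rfl⟩ : d = 0 ∧ y = x := by constructor <;> linarith
    rfl
  set L := y - x + d
  set p := (y - x) / L
  set q := d / L
  have hp : 0 ≤ p := div_nonneg (sub_nonneg.2 hxy) hL.le
  have hq : 0 ≤ q := div_nonneg hd hL.le
  have hpq : p + q = 1 := by rw [← add_div, div_self hL.ne']
  -- `x + d` and `y` are the convex combinations of `x` and `y + d` with swapped weights.
  have hxd : p • x + q • (y + d) = x + d := by
    simp only [p, q, smul_eq_mul]; field_simp; ring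
  have hy : q • x + p • (y + d) = y := by
    simp only [p, q, smul_eq_mul]; field_simp; ring
  rw [sub_le_sub_iff, add_comm (f (y + d))]
  calc f (x + d) + f y
      = f (p • x + q • (y + d)) + f (q • x + p • (y + d)) := by rw [hxd, hy]
    _ ≤ (p • f x + q • f (y + d)) + (q • f x + p • f (y + d)) :=
        add_le_add (hf.2 hx hyd hp hq hpq) (hf.2 hx hyd hq hp (by rwa [add_comm]))
    _ = (p + q) • f x + (p + q) • f (y + d) := by module
    _ = f x + f (y + d) := by rw [hpq, one_smul, one_smul]

theorem convexOn_exp_neg_rpow {α : ℝ} (hα0 : 0 ≤ α) (hα1 : α ≤ 1) :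
    ConvexOn ℝ (Ici 0) fun z : ℝ ↦ exp (-(z ^ α)) := by
  refine ⟨convex_Ici 0, fun x hx y hy a b ha hb hab ↦ ?_⟩
  calc exp (-((a • x + b • y) ^ α))
      ≤ exp (a • -(x ^ α) + b • -(y ^ α)) := by
        rw [exp_le_exp, smul_neg, smul_neg, ← neg_add, neg_le_neg_iff]
        exact (concaveOn_rpow hα0 hα1).2 hx hy ha hb hab
    _ ≤ a • exp (-(x ^ α)) + b • exp (-(y ^ α)) :=
        convexOn_exp.2 (mem_univ _) (mem_univ _) ha hb hab

/-- The bivariate logistic extreme value distribution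
`G_α(x, y) = exp(−((1/x)^(1/α) + (1/y)^(1/α))^α)` is 2-increasing: for every
0 < α ≤ 1 and all 0 < a₁ ≤ b₁, 0 < a₂ ≤ b₂,
`G_α(b₁, b₂) − G_α(a₁, b₂) − G_α(b₁, a₂) + G_α(a₁, a₂) ≥ 0`. -/
theorem logistic_bev_two_increasing (α a₁ b₁ a₂ b₂ : ℝ) (hα0 : 0 < α) (hα1 : α ≤ 1)
    (ha₁ : 0 < a₁) (hab₁ : a₁ ≤ b₁) (ha₂ : 0 < a₂) (hab₂ : a₂ ≤ b₂) :
    0 ≤ Real.exp (-(((1 / b₁) ^ (1 / α) + (1 / b₂) ^ (1 / α)) ^ α))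
      - Real.exp (-(((1 / a₁) ^ (1 / α) + (1 / b₂) ^ (1 / α)) ^ α))
      - Real.exp (-(((1 / b₁) ^ (1 / α) + (1 / a₂) ^ (1 / α)) ^ α))
      + Real.exp (-(((1 / a₁) ^ (1 / α) + (1 / a₂) ^ (1 / α)) ^ α)) := by
  have hnonneg {a : ℝ} (ha : 0 < a) : 0 ≤ (1 / a) ^ (1 / α) :=
    rpow_nonneg (one_div_pos.2 ha).le _
  have hanti {a b : ℝ} (ha : 0 < a) (hab : a ≤ b) : (1 / b) ^ (1 / α) ≤ (1 / a) ^ (1 / α) :=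
    rpow_le_rpow (one_div_pos.2 (ha.trans_le hab)).le (one_div_le_one_div_of_le ha hab)
      (one_div_nonneg.2 hα0.le)
  set t₁ := (1 / b₁) ^ (1 / α)
  set s₁ := (1 / a₁) ^ (1 / α)
  set t₂ := (1 / b₂) ^ (1 / α)
  set s₂ := (1 / a₂) ^ (1 / α)
  have h := (convexOn_exp_neg_rpow hα0.le hα1).map_add_sub_map_le
    (x := t₁ + t₂) (y := t₁ + s₂) (d := s₁ - t₁)
    (add_nonneg (hnonneg (ha₁.trans_le hab₁)) (hnonneg (ha₂.trans_le hab₂)))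
    (show 0 ≤ t₁ + s₂ + (s₁ - t₁) by linarith [hnonneg ha₁, hnonneg ha₂])
    (by linarith [hanti ha₂ hab₂]) (by linarith [hanti ha₁ hab₁])
  rw [show t₁ + t₂ + (s₁ - t₁) = s₁ + t₂ by ring,
    show t₁ + s₂ + (s₁ - t₁) = s₁ + s₂ by ring] at h
  linarith
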